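/- Independence of the tree in the detailed balanced case: let n ≥ 1 and let M : Matrix (Fin n) (Fin n) ℝ be detailed balanced with respect to a positive vector w₀ : Fin n → ℝ (w₀ i > 0 for all i, and M i j * w₀ j = M j i * w₀ i for all i, j). Let G₁, G₂ : SimpleGraph (Fin n) both be trees (IsTree), and define w^{G₁}, w^{G₂} : Fin n → ℝ by w^G k = ∏ over all ordered pairs (i, j) with G.Adj i j and G.dist i k = G.dist j k + 1 of M i j. Then the two vectors are proportional: for all i, j : Fin n, w^{G₁} i * w^{G₂} j = w^{G₁} j * w^{G₂} i. -/

import Mathlib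

/-!
Moving the root of a tree `G` from `u` to a neighbour `v` reverses the orientation of the edge
`{u, v}` and of no other edge, so by detailed balance `w^G k * w₀ k` does not depend on the
root `k`. Hence every `w^G` is proportional to `k ↦ (w₀ k)⁻¹`.
-/

open scoped Classical

namespace SimpleGraph

variable {V : Type*} {G : SimpleGraph V} {i j u v : V}

/-- In a tree, the only edge `(i, j)` pointing toward `u` but away from a neighbour `v` of `u`
is `(v, u)`. -/
theorem IsTree.eq_and_eq_of_dist_flip (hG : G.IsTree) (hij : G.Adj i j) (huv : G.Adj u v)
    (hu : G.dist i u = G.dist j u + 1) (hv : G.dist j v = G.dist i v + 1) : i = v ∧ j = u := by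
  have hiu : G.dist i u = G.dist i v + 1 := by
    have := hG.dist_eq_dist_add_one_of_adj i huv
    have := hG.dist_eq_dist_add_one_of_adj j huv
    omega
  obtain ⟨q, -, hq⟩ := hG.connected.exists_path_of_dist j u
  obtain ⟨r, -, hr⟩ := hG.connected.exists_path_of_dist i v
  have hqi : (q.cons hij).IsPath :=
    (q.cons hij).isPath_of_length_eq_dist (by simp only [Walk.length_cons]; omega)
  have hri : (r.concat huv.symm).IsPath :=
    (r.concat huv.symm).isPath_of_length_eq_dist (by simp only [Walk.length_concat]; omega)
  -- Both are the unique path from `i` to `u`; compare their second vertices.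
  have hsnd := congrArg (fun p : G.Path i u => p.val.snd)
    ((hG.isAcyclic.subsingleton_path i u).elim ⟨_, hri⟩ ⟨_, hqi⟩)
  cases r with
  | nil => exact ⟨rfl, by simpa [Walk.concat_nil] using hsnd.symm⟩
  | cons h r =>
    simp only [Walk.concat_cons, Walk.snd_cons] at hsnd
    subst hsnd
    have := dist_le r
    simp only [Walk.length_cons] at hr
    omega

noncomputable def edgesToward [Fintype V] (G : SimpleGraph V) (k : V) : Finset (V × V) :=
  Finset.univ.filter fun p => G.Adj p.1 p.2 ∧ G.dist p.1 k = G.dist p.2 k + 1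

variable [Fintype V]

@[simp]
theorem mem_edgesToward {k : V} {p : V × V} :
    p ∈ G.edgesToward k ↔ G.Adj p.1 p.2 ∧ G.dist p.1 k = G.dist p.2 k + 1 := by
  simp [edgesToward]

theorem mk_mem_edgesToward_of_adj (huv : G.Adj u v) : (u, v) ∈ G.edgesToward v := by
  simpa using huv

theorem mk_notMem_edgesToward (u v : V) : (u, v) ∉ G.edgesToward u := by
  simp

theorem IsTree.mem_edgesToward_of_adj (hG : G.IsTree) (huv : G.Adj u v) {p : V × V}
    (hp : p ∈ G.edgesToward u) (hne : p ≠ (v, u)) : p ∈ G.edgesToward v := by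
  obtain ⟨hij, hd⟩ := mem_edgesToward.mp hp
  refine mem_edgesToward.mpr ⟨hij, ?_⟩
  have := hG.dist_eq_dist_add_one_of_adj v hij
  rw [dist_comm (u := v), dist_comm (u := v)] at this
  refine this.resolve_right fun hv ↦ hne ?_
  obtain ⟨rfl, rfl⟩ := hG.eq_and_eq_of_dist_flip hij huv hd hv
  rfl

theorem IsTree.erase_edgesToward_of_adj (hG : G.IsTree) (huv : G.Adj u v) :
    (G.edgesToward u).erase (v, u) = (G.edgesToward v).erase (u, v) := by
  ext p
  simp only [Finset.mem_erase]
  constructor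
  · rintro ⟨hne, hp⟩
    exact ⟨ne_of_mem_of_not_mem hp (mk_notMem_edgesToward u v),
      hG.mem_edgesToward_of_adj huv hp hne⟩
  · rintro ⟨hne, hp⟩
    exact ⟨ne_of_mem_of_not_mem hp (mk_notMem_edgesToward v u),
      hG.mem_edgesToward_of_adj huv.symm hp hne⟩

variable {R : Type*} [CommMonoid R]

theorem IsTree.prod_edgesToward_mul_of_adj (hG : G.IsTree) (A : V → V → R) (w : V → R)
    (hA : ∀ i j, A i j * w j = A j i * w i) (huv : G.Adj u v) :
    (∏ p ∈ G.edgesToward u, A p.1 p.2) * w u =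
      (∏ p ∈ G.edgesToward v, A p.1 p.2) * w v := by
  rw [← Finset.mul_prod_erase _ _ (mk_mem_edgesToward_of_adj huv.symm),
    ← Finset.mul_prod_erase _ _ (mk_mem_edgesToward_of_adj huv), hG.erase_edgesToward_of_adj huv,
    mul_right_comm, hA, mul_right_comm]

theorem IsTree.prod_edgesToward_mul_eq (hG : G.IsTree) (A : V → V → R) (w : V → R)
    (hA : ∀ i j, A i j * w j = A j i * w i) (x y : V) :
    (∏ p ∈ G.edgesToward x, A p.1 p.2) * w x =
      (∏ p ∈ G.edgesToward y, A p.1 p.2) * w y := by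
  obtain ⟨p⟩ := hG.connected x y
  induction p with
  | nil => rfl
  | cons h _ ih => exact (hG.prod_edgesToward_mul_of_adj A w hA h).trans ih

end SimpleGraph

theorem tree_orientation_independent_of_tree_general (n : ℕ)
    (M : Matrix (Fin n) (Fin n) ℝ)
    (w₀ : Fin n → ℝ) (hw₀ : ∀ i, 0 < w₀ i)
    (hdb : ∀ i j, M i j * w₀ j = M j i * w₀ i)
    (G₁ G₂ : SimpleGraph (Fin n)) (hG₁ : G₁.IsTree) (hG₂ : G₂.IsTree)
    (w₁ w₂ : Fin n → ℝ)
    (hw₁ : ∀ k : Fin n, w₁ k =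
      ∏ p ∈ Finset.univ.filter
          (fun p : Fin n × Fin n => G₁.Adj p.1 p.2 ∧ G₁.dist p.1 k = G₁.dist p.2 k + 1),
        M p.1 p.2)
    (hw₂ : ∀ k : Fin n, w₂ k =
      ∏ p ∈ Finset.univ.filter
          (fun p : Fin n × Fin n => G₂.Adj p.1 p.2 ∧ G₂.dist p.1 k = G₂.dist p.2 k + 1),
        M p.1 p.2) :
    ∀ i j : Fin n, w₁ i * w₂ j = w₁ j * w₂ i := by
  intro i j
  have h₁ : w₁ i * w₀ i = w₁ j * w₀ j := by
    rw [hw₁, hw₁]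
    exact hG₁.prod_edgesToward_mul_eq M w₀ hdb i j
  have h₂ : w₂ j * w₀ j = w₂ i * w₀ i := by
    rw [hw₂, hw₂]
    exact hG₂.prod_edgesToward_mul_eq M w₀ hdb j i
  refine mul_right_cancel₀ (mul_pos (hw₀ i) (hw₀ j)).ne' ?_
  calc w₁ i * w₂ j * (w₀ i * w₀ j) = (w₁ i * w₀ i) * (w₂ j * w₀ j) := by ring
    _ = (w₁ j * w₀ j) * (w₂ i * w₀ i) := by rw [h₁, h₂]
    _ = w₁ j * w₂ i * (w₀ i * w₀ j) := by ring

/-- Independence of the tree in the detailed balanced case: the vectors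
obtained from two different trees by orienting all edges toward each root and
multiplying matrix entries are proportional. -/
theorem tree_orientation_independent_of_tree (n : ℕ) (hn : 1 ≤ n)
    (M : Matrix (Fin n) (Fin n) ℝ)
    (w₀ : Fin n → ℝ) (hw₀ : ∀ i, 0 < w₀ i)
    (hdb : ∀ i j, M i j * w₀ j = M j i * w₀ i)
    (G₁ G₂ : SimpleGraph (Fin n)) (hG₁ : G₁.IsTree) (hG₂ : G₂.IsTree)
    (w₁ w₂ : Fin n → ℝ)
    (hw₁ : ∀ k : Fin n, w₁ k =
      ∏ p ∈ Finset.univ.filter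
          (fun p : Fin n × Fin n => G₁.Adj p.1 p.2 ∧ G₁.dist p.1 k = G₁.dist p.2 k + 1),
        M p.1 p.2)
    (hw₂ : ∀ k : Fin n, w₂ k =
      ∏ p ∈ Finset.univ.filter
          (fun p : Fin n × Fin n => G₂.Adj p.1 p.2 ∧ G₂.dist p.1 k = G₂.dist p.2 k + 1),
        M p.1 p.2) :
    ∀ i j : Fin n, w₁ i * w₂ j = w₁ j * w₂ i :=
  tree_orientation_independent_of_tree_general n M w₀ hw₀ hdb G₁ G₂ hG₁ hG₂ w₁ w₂ hw₁ hw₂
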